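/- arXiv:1806.05107 — 2 statements merged into one kernel-verified Lean document; each statement's English description precedes it below -/
import Mathlib

section
/- Let Δ be a simplicial complex of dimension d-1 on n vertices that is CM_t for some t ≥ 0. Then Δ satisfies Serre's condition S_{2d-n-t+2}, i.e., the reduced simplicial homology H̃_i(link_Δ F; K) vanishes for all faces F ∈ Δ and all i < min{2d-n-t+1, dim(link_Δ F)}. -/
open Finset

/-! # Abstract simplicial complexes on vertex set `Fin n` -/

/-- A (nonempty) abstract simplicial complex on vertex set `Fin n`:
a collection of finite subsets containing `∅` and closed under taking subsets. -/
def IsComplex {n : ℕ} (Δ : Set (Finset (Fin n))) : Prop :=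
  ∅ ∈ Δ ∧ ∀ F ∈ Δ, ∀ G ⊆ F, G ∈ Δ

/-- The link of a face `F`. -/
def link {n : ℕ} (Δ : Set (Finset (Fin n))) (F : Finset (Fin n)) : Set (Finset (Fin n)) :=
  {G | Disjoint F G ∧ F ∪ G ∈ Δ}

/-- The dimension of a simplicial complex, as an integer (`-1` for the void/empty complex). -/
noncomputable def dimC {n : ℕ} (Δ : Set (Finset (Fin n))) : ℤ :=
  sSup ((fun F : Finset (Fin n) => (F.card : ℤ) - 1) '' Δ)

/-- `Δ` is pure with all facets of cardinality `d` (i.e. pure of dimension `d-1`):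
there is a face of cardinality `d` and every face is contained in one. -/
def IsPure {n : ℕ} (Δ : Set (Finset (Fin n))) (d : ℕ) : Prop :=
  (∃ F ∈ Δ, F.card = d) ∧ ∀ F ∈ Δ, ∃ G ∈ Δ, F ⊆ G ∧ G.card = d

/-- The Alexander dual `Δ^∨ = {F : [n] \ F ∉ Δ}`. -/
def dualC {n : ℕ} (Δ : Set (Finset (Fin n))) : Set (Finset (Fin n)) :=
  {F | Fᶜ ∉ Δ}

/-! ## Simplicial (reduced, augmented) chain complex and reduced homology -/

variable (K : Type) [Field K]

/-- The space of `k`-chains: formal `K`-linear combinations of faces of cardinality `k`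
(`k = 0` gives the span of the empty face, playing the role of the augmentation). -/
abbrev Chains {n : ℕ} (Δ : Set (Finset (Fin n))) (k : ℕ) : Type :=
  {F : Finset (Fin n) // F ∈ Δ ∧ F.card = k} →₀ K

/-- The boundary of a single face of cardinality `k+1`. -/
noncomputable def boundaryElt {n : ℕ} (Δ : Set (Finset (Fin n))) (k : ℕ)
    (F : {F : Finset (Fin n) // F ∈ Δ ∧ F.card = k + 1}) : Chains K Δ k :=
  ∑ v ∈ F.1.attach, open Classical in if h : F.1.erase v.1 ∈ Δ then
      ((-1 : K) ^ (F.1.filter (fun w => w < v.1)).card) •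
        Finsupp.single ⟨F.1.erase v.1,
          ⟨h, by simp [Finset.card_erase_of_mem v.2, F.2.2]⟩⟩ 1
    else 0

/-- The simplicial boundary map from `(k+1)`-chains to `k`-chains
(for `k = 0` this is the augmentation map). -/
noncomputable def boundaryMap {n : ℕ} (Δ : Set (Finset (Fin n))) (k : ℕ) :
    Chains K Δ (k + 1) →ₗ[K] Chains K Δ k :=
  Finsupp.lsum K fun F => LinearMap.toSpanSingleton K _ (boundaryElt K Δ k F)

/-- Vanishing of the `i`-th reduced simplicial homology of `Δ` with coefficients in `K`
(`i : ℤ`; for `i ≤ -2` the homology is trivially zero, `i = -1` concerns the augmentation). -/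
noncomputable def ReducedHomologyZero {n : ℕ} (Δ : Set (Finset (Fin n))) (i : ℤ) : Prop :=
  if i ≤ -2 then True
  else if i = -1 then Function.Surjective (boundaryMap K Δ 0)
  else LinearMap.ker (boundaryMap K Δ i.toNat) ≤ LinearMap.range (boundaryMap K Δ (i.toNat + 1))

/-! ## Cohen–Macaulay complexes (Reisner's criterion) and relatives -/

/-- `Δ` is Cohen–Macaulay over `K` (by Reisner's criterion). -/
noncomputable def IsCMComplex {n : ℕ} (Δ : Set (Finset (Fin n))) : Prop :=
  IsComplex Δ ∧ ∀ F ∈ Δ, ∀ i : ℤ, i < dimC (link Δ F) → ReducedHomologyZero K (link Δ F) i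

/-- `Δ` is `CMₜ` over `K` with facets of cardinality `d`: it is pure and the link of every
face of cardinality at least `t` is Cohen–Macaulay. -/
noncomputable def IsCMt {n : ℕ} (Δ : Set (Finset (Fin n))) (d t : ℕ) : Prop :=
  IsComplex Δ ∧ IsPure Δ d ∧ ∀ F ∈ Δ, t ≤ F.card → IsCMComplex K (link Δ F)

/-- `Δ` is Buchsbaum over `K` with facets of cardinality `d`: pure, and
`H̃ᵢ(link F; K) = 0` for every nonempty face `F` and `i < dim link F`. -/
noncomputable def IsBuchsbaum {n : ℕ} (Δ : Set (Finset (Fin n))) (d : ℕ) : Prop :=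
  IsComplex Δ ∧ IsPure Δ d ∧ ∀ F ∈ Δ, F ≠ ∅ →
    ∀ i : ℤ, i < dimC (link Δ F) → ReducedHomologyZero K (link Δ F) i

/-- Serre's condition `S_r`: `H̃ᵢ(link F; K) = 0` for all faces `F` and all
`i < min (r-1) (dim link F)`. -/
noncomputable def SerreS {n : ℕ} (Δ : Set (Finset (Fin n))) (r : ℤ) : Prop :=
  ∀ F ∈ Δ, ∀ i : ℤ, i < min (r - 1) (dimC (link Δ F)) → ReducedHomologyZero K (link Δ F) i
/-! ## Polynomial rings, Stanley–Reisner ideals, graded Betti numbers, depth -/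

/-- The polynomial ring `K[x_1,…,x_n]`. -/
abbrev PolyR (K : Type) [Field K] (n : ℕ) := MvPolynomial (Fin n) K

/-- The Stanley–Reisner ideal `I_Δ`, generated by the monomials supported on non-faces. -/
noncomputable def srIdeal {n : ℕ} (Δ : Set (Finset (Fin n))) : Ideal (PolyR K n) :=
  Ideal.span ((fun F : Finset (Fin n) => ∏ i ∈ F, MvPolynomial.X i) '' {F | F ∉ Δ})

section Koszul

variable (n : ℕ) (M : Type) [AddCommGroup M] [Module (PolyR K n) M]
  [Module K M] [IsScalarTower K (PolyR K n) M]

/-- The `i`-th term `M ⊗ Λⁱ(Kⁿ)` of the Koszul complex of `x_1,…,x_n` with values in `M`,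
realized as finitely supported families indexed by `i`-subsets of `[n]`. -/
abbrev KChains (i : ℕ) : Type := {S : Finset (Fin n) // S.card = i} →₀ M

/-- Multiplication by the variable `x_v`, as a `K`-linear endomorphism of `M`. -/
noncomputable def smulX (v : Fin n) : M →ₗ[K] M where
  toFun m := (MvPolynomial.X v : PolyR K n) • m
  map_add' a b := smul_add _ a b
  map_smul' c m := smul_comm (MvPolynomial.X v : PolyR K n) c m

/-- Koszul differential on a basis element. -/
noncomputable def kdElt (i : ℕ) (S : {S : Finset (Fin n) // S.card = i + 1}) :
    M →ₗ[K] KChains n M i :=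
  ∑ v ∈ S.1.attach, ((-1 : K) ^ ((S.1.filter (fun w => w < v.1)).card)) •
    ((Finsupp.lsingle (M := M) ⟨S.1.erase v.1, by
        simp [Finset.card_erase_of_mem v.2, S.2]⟩).comp (smulX K n M v.1))

/-- The Koszul differential `M ⊗ Λ^{i+1} → M ⊗ Λ^i` for the sequence `x_1,…,x_n`. -/
noncomputable def kd (i : ℕ) : KChains n M (i + 1) →ₗ[K] KChains n M i :=
  Finsupp.lsum K fun S => kdElt K n M i S

/-- The Koszul differential leaving homological degree `i` (the zero map for `i = 0`). -/
noncomputable def kdOut : ∀ i : ℕ, KChains n M i →ₗ[K] KChains n M (i - 1)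
  | 0 => 0
  | (i + 1) => kd K n M i

/-- The internal-degree-`j` part of the `i`-th Koszul chain module, with respect to a
grading `g` of `M` by `K`-subspaces (`e_S ⊗ m` has degree `|S| + deg m`). -/
def KCdeg (g : ℤ → Submodule K M) (i : ℕ) (j : ℤ) : Submodule K (KChains n M i) where
  carrier := {f | ∀ S, f S ∈ g (j - i)}
  add_mem' := fun hf hg S => by
    rw [Finsupp.add_apply]; exact add_mem (hf S) (hg S)
  zero_mem' := fun S => by rw [Finsupp.zero_apply]; exact zero_mem _
  smul_mem' := fun c f hf S => by
    rw [Finsupp.smul_apply]; exact Submodule.smul_mem _ c (hf S)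

/-- Vanishing of the graded Betti number `β_{i,j}(M) = dim_K Tor_i(M,K)_j`, expressed via
the Koszul complex of `x_1,…,x_n`: every internal-degree-`j` cycle in homological degree `i`
is a boundary. -/
noncomputable def BettiZero (g : ℤ → Submodule K M) (i : ℕ) (j : ℤ) : Prop :=
  ∀ f ∈ KCdeg K n M g i j, kdOut K n M i f = 0 → f ∈ LinearMap.range (kd K n M i)

end Koszul

/-- The grading of a homogeneous ideal `I ⊆ K[x_1,…,x_n]` by `K`-subspaces. -/
noncomputable def idealGrading {n : ℕ} (I : Ideal (PolyR K n)) (j : ℤ) : Submodule K ↥I :=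
  Submodule.comap ((Submodule.subtype I).restrictScalars K)
    (if 0 ≤ j then Submodule.restrictScalars K
        (MvPolynomial.homogeneousSubmodule (Fin n) K j.toNat) else ⊥)

/-- The grading of the quotient `K[x_1,…,x_n]/I` by a homogeneous ideal. -/
noncomputable def quotGrading {n : ℕ} (I : Ideal (PolyR K n)) (j : ℤ) :
    Submodule K (PolyR K n ⧸ I) :=
  Submodule.map ((Submodule.mkQ I).restrictScalars K)
    (if 0 ≤ j then Submodule.restrictScalars K
        (MvPolynomial.homogeneousSubmodule (Fin n) K j.toNat) else ⊥)

/-- The Green–Lazarsfeld property `N_{e,p}` for a homogeneous ideal `I`: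
`I` is generated in degree `e` and `β_{i,j}(I) = 0` for all `i < p` and `j ≠ i + e`. -/
noncomputable def PropertyN {n : ℕ} (I : Ideal (PolyR K n)) (e : ℕ) (p : ℤ) : Prop :=
  I = Ideal.span {f | f ∈ I ∧ MvPolynomial.IsHomogeneous f e} ∧
  ∀ (i : ℕ) (j : ℤ), (i : ℤ) < p → j ≠ (i : ℤ) + e →
    BettiZero K n ↥I (idealGrading K I) i j

/-- The graded maximal ideal `(x_1,…,x_n)`. -/
noncomputable def maxIdeal (n : ℕ) : Ideal (PolyR K n) :=
  Ideal.span (Set.range MvPolynomial.X)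

/-- `depth M ≥ k`: there exists an `M`-regular sequence of length at least `k` inside
the graded maximal ideal `(x_1,…,x_n)`. -/
noncomputable def DepthGE {n : ℕ} (M : Type) [AddCommGroup M] [Module (PolyR K n) M]
    (k : ℤ) : Prop :=
  ∃ rs : List (PolyR K n), k ≤ (rs.length : ℤ) ∧ (∀ r ∈ rs, r ∈ maxIdeal K n) ∧
    RingTheory.Sequence.IsRegular M rs

/-- The Stanley–Reisner ring `K[Δ]`. -/
abbrev SRRing {n : ℕ} (Δ : Set (Finset (Fin n))) : Type := PolyR K n ⧸ srIdeal K Δ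
/-! ## Graphs, cycles, chords, clique complexes, f-vectors -/

/-- The clique complex of a graph: faces are the (finite) cliques. -/
def cliqueComplexC {V : Type} (G : SimpleGraph V) : Set (Finset V) :=
  {F | G.IsClique ↑F}

/-- The 1-skeleton of a simplicial complex, as a simple graph. -/
def oneSkeleton {n : ℕ} (Δ : Set (Finset (Fin n))) : SimpleGraph (Fin n) where
  Adj a b := a ≠ b ∧ ({a, b} : Finset (Fin n)) ∈ Δ
  symm := ⟨fun a b h => ⟨h.1.symm, by rw [Finset.pair_comm]; exact h.2⟩⟩
  loopless := ⟨fun a h => h.1 rfl⟩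

/-- A cycle (walk) has a chord: an edge of `G` joining two vertices of the cycle
which is not an edge of the cycle. -/
def HasChord {V : Type} {G : SimpleGraph V} {v : V} (c : G.Walk v v) : Prop :=
  ∃ a b, a ∈ c.support ∧ b ∈ c.support ∧ G.Adj a b ∧ s(a, b) ∉ c.edges

/-- Every cycle of `G` of length at most `r` (and at least `4`, so that a chord can exist)
has a chord. -/
def ChordalUpTo {V : Type} (G : SimpleGraph V) (r : ℕ) : Prop :=
  ∀ ⦃v : V⦄ (c : G.Walk v v), c.IsCycle → 4 ≤ c.length → c.length ≤ r → HasChord c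

/-- `G` is chordal: every cycle of length at least 4 has a chord. -/
def IsChordalGraph {V : Type} (G : SimpleGraph V) : Prop :=
  ∀ ⦃v : V⦄ (c : G.Walk v v), c.IsCycle → 4 ≤ c.length → HasChord c

/-- `G` is bipartite. -/
def IsBipartite {V : Type} (G : SimpleGraph V) : Prop :=
  ∃ f : V → Bool, ∀ a b, G.Adj a b → f a ≠ f b

/-- The cycle graph on `m` vertices. -/
def cycleGraph (m : ℕ) : SimpleGraph (Fin m) where
  Adj a b := a ≠ b ∧ ((a.val + 1) % m = b.val ∨ (b.val + 1) % m = a.val)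
  symm := ⟨fun a b h => ⟨h.1.symm, h.2.symm⟩⟩
  loopless := ⟨fun a h => h.1 rfl⟩

/-- The edge ideal `I(G)` of a graph on `[n]`. -/
noncomputable def edgeIdeal {n : ℕ} (G : SimpleGraph (Fin n)) : Ideal (PolyR K n) :=
  Ideal.span {f | ∃ a b, G.Adj a b ∧ f = MvPolynomial.X a * MvPolynomial.X b}

/-- A homogeneous ideal generated in degree `e` has a linear resolution:
`β_{i,j} = 0` whenever `j ≠ i + e`. -/
noncomputable def HasLinearResolution {n : ℕ} (I : Ideal (PolyR K n)) (e : ℕ) : Prop :=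
  I = Ideal.span {f | f ∈ I ∧ MvPolynomial.IsHomogeneous f e} ∧
  ∀ (i : ℕ) (j : ℤ), j ≠ (i : ℤ) + e → BettiZero K n ↥I (idealGrading K I) i j

/-- The number of faces of `Δ` of cardinality `k` (so `faceCount Δ k = f_{k-1}`). -/
noncomputable def faceCount {n : ℕ} (Δ : Set (Finset (Fin n))) (k : ℕ) : ℕ :=
  Set.ncard {F | F ∈ Δ ∧ F.card = k}

/-- The set of facets (maximal faces) of `Δ`. -/
def facetSet {n : ℕ} (Δ : Set (Finset (Fin n))) : Set (Finset (Fin n)) :=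
  {F | F ∈ Δ ∧ ∀ G ∈ Δ, F ⊆ G → F = G}

/-- The complex on the vertices of the `r`-cycle whose facets are the complements
`V(C) \ {i, j}` of the non-adjacent (non-consecutive) pairs of vertices of the cycle. -/
def GammaC (r : ℕ) : Set (Finset (Fin r)) :=
  {G | ∃ i j : Fin r, i ≠ j ∧ ¬ (cycleGraph r).Adj i j ∧ G ⊆ ({i, j} : Finset (Fin r))ᶜ}

/-!
For a vertex `w` of a complex `X`, every face either avoids `w` or is `w` joined to a face of
the link of `w`. Splitting chains this way (`X` is the deletion `X ∖ w` and the star of `w`,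
glued along `lk w`) makes `H̃ᵢ(X ∖ w) → H̃ᵢ(X) → H̃ᵢ₋₁(lk w)` and
`H̃ᵢ(lk w) → H̃ᵢ(X ∖ w) → H̃ᵢ(X)` exact.

Let `Γ` be pure with facets of size `e` and vertices in `U`. Suppose the links of all faces of
size at least `s` are Cohen–Macaulay, and `S` misses `m` vertices of `U`. Then the subcomplex
induced on `S` has `H̃ᵢ = 0` for `i < e - m - 1` and, if `s > 0`, `i < 2e - |U| - s + 1`. The
proof is by induction on `(s, m)`. If `m > 0`, delete a vertex `w ∉ S` from the subcomplex
induced on `S ∪ {w}`: that subcomplex has parameters `(s, m - 1)`, and its link of `w` has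
`(s - 1, m - 1)`. If `m = 0` and `s = 0`, `Γ` is Cohen–Macaulay. If `m = 0` and `s > 0`, then
`|U| < 2e`, so any two facets meet and `H̃₀ = 0`. In the other degrees, grow a facet (a
simplex) to `U` one vertex at a time. The link of each new vertex has parameter `s - 1` and
misses at most `|U| - e - 1` vertices.

The theorem is the case `Γ = lk_Δ F`, `s = t - |F|`, `m = 0`.
-/

section Operations

variable {n : ℕ} {X : Set (Finset (Fin n))}

def induced (X : Set (Finset (Fin n))) (S : Finset (Fin n)) : Set (Finset (Fin n)) :=
  {F | F ∈ X ∧ F ⊆ S}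

def deletion (X : Set (Finset (Fin n))) (w : Fin n) : Set (Finset (Fin n)) :=
  {F | F ∈ X ∧ w ∉ F}

theorem isComplex_induced (hX : IsComplex X) (S : Finset (Fin n)) :
    IsComplex (induced X S) :=
  ⟨⟨hX.1, empty_subset S⟩, fun _ hF _ hG => ⟨hX.2 _ hF.1 _ hG, hG.trans hF.2⟩⟩

theorem isComplex_deletion (hX : IsComplex X) (w : Fin n) : IsComplex (deletion X w) :=
  ⟨⟨hX.1, notMem_empty w⟩, fun _ hF _ hG => ⟨hX.2 _ hF.1 _ hG, fun hw => hF.2 (hG hw)⟩⟩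

theorem isComplex_link (hX : IsComplex X) {F : Finset (Fin n)} (hF : F ∈ X) :
    IsComplex (link X F) :=
  ⟨⟨disjoint_empty_right F, by rwa [union_empty]⟩, fun _ hG _ hH =>
    ⟨disjoint_of_subset_right hH hG.1, hX.2 _ hG.2 _ (union_subset_union_right hH)⟩⟩

theorem IsComplex.mem_of_mem_link (hX : IsComplex X) {F G : Finset (Fin n)}
    (hG : G ∈ link X F) : G ∈ X :=
  hX.2 _ hG.2 _ subset_union_right

theorem IsComplex.mem_deletion_of_mem_link (hX : IsComplex X) {w : Fin n}
    {G : Finset (Fin n)} (hG : G ∈ link X {w}) : G ∈ deletion X w :=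
  ⟨hX.mem_of_mem_link hG, disjoint_singleton_left.1 hG.1⟩

theorem insert_mem_of_mem_link {w : Fin n} {G : Finset (Fin n)} (hG : G ∈ link X {w}) :
    insert w G ∈ X := by
  simpa only [insert_eq] using hG.2

theorem erase_mem_link {w : Fin n} {F : Finset (Fin n)} (hF : F ∈ X) (hw : w ∈ F) :
    F.erase w ∈ link X {w} :=
  ⟨disjoint_singleton_left.2 (notMem_erase w F), by rwa [← insert_eq, insert_erase hw]⟩

theorem link_empty (X : Set (Finset (Fin n))) : link X ∅ = X := by
  ext G; simp [link]

theorem link_link {F G : Finset (Fin n)} (hFG : Disjoint F G) :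
    link (link X F) G = link X (F ∪ G) := by
  ext H
  simp only [link, Set.mem_ofPred_eq, disjoint_union_left, disjoint_union_right, union_assoc]
  tauto

theorem subset_sdiff_of_mem_link {U F G : Finset (Fin n)} (hU : ∀ F ∈ X, F ⊆ U)
    (hG : G ∈ link X F) : G ⊆ U \ F :=
  subset_sdiff.2 ⟨subset_union_right.trans (hU _ hG.2), hG.1.symm⟩

theorem deletion_induced (X : Set (Finset (Fin n))) (S : Finset (Fin n)) (w : Fin n) :
    deletion (induced X S) w = induced X (S.erase w) := by
  ext F
  simp only [deletion, induced, Set.mem_ofPred_eq, subset_erase]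
  tauto

theorem link_induced {S : Finset (Fin n)} {w : Fin n} (hw : w ∈ S) :
    link (induced X S) {w} = induced (link X {w}) (S.erase w) := by
  ext G
  simp only [link, induced, Set.mem_ofPred_eq, disjoint_singleton_left, ← insert_eq,
    insert_subset_iff, subset_erase]
  tauto

theorem induced_eq_self {S : Finset (Fin n)} (hS : ∀ F ∈ X, F ⊆ S) : induced X S = X :=
  Set.ext fun F => ⟨And.left, fun hF => ⟨hF, hS F hF⟩⟩

theorem induced_erase_of_singleton_notMem (hX : IsComplex X) {w : Fin n}
    (hw : ({w} : Finset (Fin n)) ∉ X) (S : Finset (Fin n)) :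
    induced X (S.erase w) = induced X S := by
  ext F
  simp only [induced, Set.mem_ofPred_eq, subset_erase]
  exact ⟨fun h => ⟨h.1, h.2.1⟩, fun h =>
    ⟨h.1, h.2, fun hwF => hw (hX.2 F h.1 {w} (singleton_subset_iff.2 hwF))⟩⟩

end Operations

section Pure

variable {n e : ℕ} {Γ : Set (Finset (Fin n))}

theorem IsPure.card_le (hP : IsPure Γ e) {F : Finset (Fin n)} (hF : F ∈ Γ) : F.card ≤ e := by
  obtain ⟨G, -, hFG, rfl⟩ := hP.2 F hF
  exact card_le_card hFG

theorem isPure_link (hP : IsPure Γ e) {F : Finset (Fin n)} (hF : F ∈ Γ) :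
    IsPure (link Γ F) (e - F.card) := by
  have key : ∀ H, Disjoint F H → F ∪ H ∈ Γ →
      ∃ G ∈ link Γ F, H ⊆ G ∧ G.card = e - F.card := by
    intro H hFH hH
    obtain ⟨G, hG, hHG, rfl⟩ := hP.2 _ hH
    have hFG : F ⊆ G := subset_union_left.trans hHG
    refine ⟨G \ F, ⟨disjoint_sdiff, by rwa [union_sdiff_of_subset hFG]⟩, ?_,
      card_sdiff_of_subset hFG⟩
    exact subset_sdiff.2 ⟨subset_union_right.trans hHG, hFH.symm⟩
  refine ⟨?_, fun H hH => key H hH.1 hH.2⟩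
  obtain ⟨G, hG, -, hGc⟩ := key ∅ (disjoint_empty_right F) (by rwa [union_empty])
  exact ⟨G, hG, hGc⟩

theorem IsPure.dimC_eq (hP : IsPure Γ e) : dimC Γ = (e : ℤ) - 1 := by
  obtain ⟨G, hG, hGc⟩ := hP.1
  have hbound : ∀ x ∈ (fun F : Finset (Fin n) => (F.card : ℤ) - 1) '' Γ, x ≤ (e : ℤ) - 1 := by
    rintro x ⟨F, hF, rfl⟩
    have := hP.card_le hF
    simp only
    omega
  exact le_antisymm (csSup_le ⟨_, G, hG, rfl⟩ hbound)
    (le_csSup ⟨_, hbound⟩ ⟨G, hG, by simp [hGc]⟩)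

end Pure

section CohenMacaulay

variable {K} {n : ℕ} {Γ : Set (Finset (Fin n))}

theorem IsCMComplex.reducedHomologyZero (h : IsCMComplex K Γ) {i : ℤ} (hi : i < dimC Γ) :
    ReducedHomologyZero K Γ i := by
  simpa only [link_empty] using h.2 ∅ h.1.1 i (by rwa [link_empty])

variable (K) in
def LinksCMFrom (Γ : Set (Finset (Fin n))) (s : ℕ) : Prop :=
  ∀ F ∈ Γ, s ≤ F.card → IsCMComplex K (link Γ F)

theorem linksCMFrom_link {s : ℕ} (h : LinksCMFrom K Γ s) (F : Finset (Fin n)) :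
    LinksCMFrom K (link Γ F) (s - F.card) := by
  intro G hG hGc
  rw [link_link hG.1]
  exact h _ hG.2 (by rw [card_union_of_disjoint hG.1]; omega)

end CohenMacaulay

section Signs

variable {K} {n : ℕ}

variable (K) in
noncomputable def vertexSign (v : Fin n) (F : Finset (Fin n)) : K :=
  (-1) ^ (F.filter (fun w => w < v)).card

theorem vertexSign_mul_self (v : Fin n) (F : Finset (Fin n)) :
    vertexSign K v F * vertexSign K v F = 1 := by
  rw [vertexSign, ← pow_add, ← two_mul, pow_mul, neg_one_sq, one_pow]

theorem vertexSign_singleton_self (v : Fin n) : vertexSign K v {v} = 1 := by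
  rw [vertexSign, filter_singleton, if_neg (lt_irrefl v), card_empty, pow_zero]

theorem vertexSign_insert_of_not_lt {w v : Fin n} (h : ¬ w < v) (F : Finset (Fin n)) :
    vertexSign K v (insert w F) = vertexSign K v F := by
  rw [vertexSign, vertexSign, filter_insert, if_neg h]

theorem vertexSign_insert_of_lt {w v : Fin n} {F : Finset (Fin n)} (hw : w ∉ F) (h : w < v) :
    vertexSign K v (insert w F) = - vertexSign K v F := by
  rw [vertexSign, vertexSign, filter_insert, if_pos h,
    card_insert_of_notMem (fun hmem => hw (mem_filter.1 hmem).1), pow_succ, mul_neg_one]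

theorem vertexSign_erase_of_not_lt {w v : Fin n} (h : ¬ w < v) (F : Finset (Fin n)) :
    vertexSign K v (F.erase w) = vertexSign K v F := by
  rw [vertexSign, vertexSign, filter_erase, erase_eq_of_notMem]
  exact fun hmem => h (mem_filter.1 hmem).2

theorem vertexSign_erase_of_lt {w v : Fin n} {F : Finset (Fin n)} (hw : w ∈ F) (h : w < v) :
    vertexSign K v (F.erase w) = - vertexSign K v F := by
  conv_rhs => rw [← insert_erase hw]
  rw [vertexSign_insert_of_lt (notMem_erase w F) h, neg_neg]

theorem vertexSign_erase_self (v : Fin n) (F : Finset (Fin n)) :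
    vertexSign K v (F.erase v) = vertexSign K v F :=
  vertexSign_erase_of_not_lt (lt_irrefl v) F

theorem vertexSign_insert_self (v : Fin n) (F : Finset (Fin n)) :
    vertexSign K v (insert v F) = vertexSign K v F :=
  vertexSign_insert_of_not_lt (lt_irrefl v) F

theorem vertexSign_mul_vertexSign_erase_add {v x : Fin n} {F : Finset (Fin n)} (hv : v ∈ F)
    (hx : x ∈ F) (hne : v ≠ x) :
    vertexSign K v F * vertexSign K x (F.erase v) +
      vertexSign K x F * vertexSign K v (F.erase x) = 0 := by
  rcases lt_or_gt_of_ne hne with h | h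
  · rw [vertexSign_erase_of_lt hv h, vertexSign_erase_of_not_lt (not_lt_of_gt h)]
    ring
  · rw [vertexSign_erase_of_lt hx h, vertexSign_erase_of_not_lt (not_lt_of_gt h)]
    ring

theorem vertexSign_mul_vertexSign_insert {w x : Fin n} {G : Finset (Fin n)} (hw : w ∉ G)
    (hx : x ∈ G) :
    vertexSign K w G * vertexSign K x (insert w G) =
      -(vertexSign K x G * vertexSign K w (G.erase x)) := by
  rcases lt_or_gt_of_ne (fun h : w = x => hw (h ▸ hx)) with h | h
  · rw [vertexSign_insert_of_lt hw h, vertexSign_erase_of_not_lt (not_lt_of_gt h)]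
    ring
  · rw [vertexSign_insert_of_not_lt (not_lt_of_gt h), vertexSign_erase_of_lt hx h]
    ring

end Signs

section FaceChains

variable {K} {n : ℕ} {X : Set (Finset (Fin n))}

variable (K) in
noncomputable def faceChain (X : Set (Finset (Fin n))) (k : ℕ) (A : Finset (Fin n)) :
    Chains K X k :=
  open Classical in if h : A ∈ X ∧ A.card = k then Finsupp.single ⟨A, h⟩ 1 else 0

theorem faceChain_of_mem {k : ℕ} {A : Finset (Fin n)} (h : A ∈ X ∧ A.card = k) :
    faceChain K X k A = Finsupp.single ⟨A, h⟩ 1 :=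
  dif_pos h

theorem single_eq_smul_faceChain {k : ℕ} (a : {F : Finset (Fin n) // F ∈ X ∧ F.card = k})
    (c : K) : Finsupp.single a c = c • faceChain K X k a.1 := by
  rw [faceChain_of_mem a.2, Finsupp.smul_single, smul_eq_mul, mul_one]

theorem boundaryMap_faceChain (hX : IsComplex X) {k : ℕ} {A : Finset (Fin n)} (hA : A ∈ X)
    (hc : A.card = k + 1) :
    boundaryMap K X k (faceChain K X (k + 1) A) =
      ∑ v ∈ A, vertexSign K v A • faceChain K X k (A.erase v) := by
  rw [faceChain_of_mem ⟨hA, hc⟩, boundaryMap, Finsupp.lsum_single,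
    LinearMap.toSpanSingleton_apply, one_smul, boundaryElt, ← sum_attach A]
  refine sum_congr rfl fun v _ => ?_
  have hmem : A.erase v ∈ X := hX.2 _ hA _ (erase_subset _ _)
  rw [dif_pos hmem, faceChain_of_mem ⟨hmem, by rw [card_erase_of_mem v.2, hc]; rfl⟩]
  rfl

theorem boundaryMap_boundaryMap (hX : IsComplex X) {k : ℕ} (x : Chains K X (k + 2)) :
    boundaryMap K X k (boundaryMap K X (k + 1) x) = 0 := by
  classical
  induction x using Finsupp.induction_linear with
  | zero => simp
  | add f g hf hg => rw [map_add, map_add, hf, hg, add_zero]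
  | single a c =>
    obtain ⟨A, hA, hAc⟩ := a
    let term : Fin n × Fin n → Chains K X k := fun p => if p.1 = p.2 then 0 else
      (vertexSign K p.1 A * vertexSign K p.2 (A.erase p.1)) •
        faceChain K X k ((A.erase p.1).erase p.2)
    have hinner : ∀ v ∈ A,
        boundaryMap K X k (vertexSign K v A • faceChain K X (k + 1) (A.erase v)) =
          ∑ x ∈ A, term (v, x) := by
      intro v hv
      rw [map_smul, boundaryMap_faceChain hX (hX.2 _ hA _ (erase_subset _ _))
        (by rw [card_erase_of_mem hv, hAc]; rfl), smul_sum, ← sum_erase A (f := fun x => term (v, x)) (a := v) (if_pos rfl)]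
      exact sum_congr rfl fun x hx => by
        simp only [term, if_neg (ne_of_mem_erase hx).symm, smul_smul]
    rw [single_eq_smul_faceChain, map_smul, map_smul, boundaryMap_faceChain hX hA hAc,
      map_sum, sum_congr rfl hinner, ← sum_product', smul_eq_zero]
    -- the terms of `(v, x)` and `(x, v)` cancel, as both erase the same pair of vertices
    refine Or.inr (sum_involution (fun p _ => p.swap) (fun p hp => ?_) (fun p _ hp => ?_)
      (fun p hp => mem_product.2 (mem_product.1 hp).symm) (fun p _ => rfl))
    · obtain ⟨hv, hx⟩ := mem_product.1 hp
      by_cases hvx : p.1 = p.2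
      · simp [term, hvx]
      · simp only [term, Prod.fst_swap, Prod.snd_swap, if_neg hvx, if_neg (Ne.symm hvx),
          erase_right_comm (s := A) (a := p.2), ← add_smul,
          vertexSign_mul_vertexSign_erase_add hv hx hvx, zero_smul]
    · rintro hswap
      refine hp (if_pos ?_)
      exact congrArg Prod.snd hswap
end FaceChains

section VertexSplitting

variable {K} {n : ℕ} {X Y : Set (Finset (Fin n))} {k : ℕ}

theorem faceChain_eq_zero {A : Finset (Fin n)} (h : ¬ (A ∈ X ∧ A.card = k)) :
    faceChain K X k A = 0 :=
  dif_neg h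

theorem Chains.ext_faceChain {M : Type} [AddCommGroup M] [Module K M]
    {f g : Chains K X k →ₗ[K] M}
    (h : ∀ A ∈ X, A.card = k → f (faceChain K X k A) = g (faceChain K X k A))
    (z : Chains K X k) : f z = g z :=
  LinearMap.congr_fun (Finsupp.lhom_ext fun a c => by
    rw [single_eq_smul_faceChain, map_smul, map_smul, h a.1 a.2.1 a.2.2]) z

variable (K) in
noncomputable def liftChains (X : Set (Finset (Fin n))) (k : ℕ) {M : Type} [AddCommGroup M]
    [Module K M] (φ : Finset (Fin n) → M) : Chains K X k →ₗ[K] M :=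
  Finsupp.lsum K fun a => LinearMap.toSpanSingleton K M (φ a.1)

theorem liftChains_faceChain {M : Type} [AddCommGroup M] [Module K M]
    (φ : Finset (Fin n) → M) {A : Finset (Fin n)} (hA : A ∈ X) (hc : A.card = k) :
    liftChains K X k φ (faceChain K X k A) = φ A := by
  rw [faceChain_of_mem ⟨hA, hc⟩, liftChains, Finsupp.lsum_single,
    LinearMap.toSpanSingleton_apply, one_smul]

variable (K) in
/-- The inclusion of chains if `X ⊆ Y`, the projection if `Y ⊆ X`: faces of `X` that are not
faces of `Y` go to `0`. -/
noncomputable def inclChains (X Y : Set (Finset (Fin n))) (k : ℕ) :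
    Chains K X k →ₗ[K] Chains K Y k :=
  liftChains K X k (faceChain K Y k)

variable (K) in
noncomputable def insertChains (X : Set (Finset (Fin n))) (w : Fin n) (k : ℕ) :
    Chains K (link X {w}) k →ₗ[K] Chains K X (k + 1) :=
  liftChains K _ k fun G => vertexSign K w G • faceChain K X (k + 1) (insert w G)

variable (K) in
/-- Faces avoiding `w` are sent to `0`: erasing `w` does not lower their cardinality. -/
noncomputable def eraseChains (X : Set (Finset (Fin n))) (w : Fin n) (k : ℕ) :
    Chains K X (k + 1) →ₗ[K] Chains K (link X {w}) k :=
  liftChains K X (k + 1) fun A => vertexSign K w A • faceChain K (link X {w}) k (A.erase w)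

theorem inclChains_faceChain {A : Finset (Fin n)} (hA : A ∈ X) (hc : A.card = k) :
    inclChains K X Y k (faceChain K X k A) = faceChain K Y k A :=
  liftChains_faceChain _ hA hc

theorem insertChains_faceChain {w : Fin n} {G : Finset (Fin n)} (hG : G ∈ link X {w})
    (hc : G.card = k) :
    insertChains K X w k (faceChain K _ k G) =
      vertexSign K w G • faceChain K X (k + 1) (insert w G) :=
  liftChains_faceChain _ hG hc

theorem eraseChains_faceChain {w : Fin n} {A : Finset (Fin n)} (hA : A ∈ X)
    (hc : A.card = k + 1) :
    eraseChains K X w k (faceChain K X (k + 1) A) =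
      vertexSign K w A • faceChain K (link X {w}) k (A.erase w) :=
  liftChains_faceChain _ hA hc

theorem eraseChains_faceChain_of_notMem {w : Fin n} {A : Finset (Fin n)} (hA : A ∈ X)
    (hc : A.card = k + 1) (hw : w ∉ A) : eraseChains K X w k (faceChain K X (k + 1) A) = 0 := by
  rw [eraseChains_faceChain hA hc, erase_eq_of_notMem hw, faceChain_eq_zero (by omega),
    smul_zero]

theorem eraseChains_insertChains {w : Fin n} (γ : Chains K (link X {w}) k) :
    eraseChains K X w k (insertChains K X w k γ) = γ := by
  refine Chains.ext_faceChain (f := eraseChains K X w k ∘ₗ insertChains K X w k)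
    (g := LinearMap.id) (fun G hG hc => ?_) γ
  have hw : w ∉ G := disjoint_singleton_left.1 hG.1
  rw [LinearMap.comp_apply, insertChains_faceChain hG hc, map_smul,
    eraseChains_faceChain (insert_mem_of_mem_link hG) (by rw [card_insert_of_notMem hw, hc]),
    erase_insert hw, vertexSign_insert_self, smul_smul, vertexSign_mul_self, one_smul,
    LinearMap.id_apply]

theorem inclChains_inclChains_deletion {w : Fin n} (u : Chains K (deletion X w) k) :
    inclChains K X (deletion X w) k (inclChains K (deletion X w) X k u) = u := by
  refine Chains.ext_faceChain (f := inclChains K X (deletion X w) k ∘ₗ inclChains K _ X k)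
    (g := LinearMap.id) (fun A hA hc => ?_) u
  rw [LinearMap.comp_apply, inclChains_faceChain hA hc, inclChains_faceChain hA.1 hc,
    LinearMap.id_apply]

theorem eraseChains_inclChains_of_notMem {w : Fin n} {Z : Set (Finset (Fin n))}
    (hZ : ∀ A ∈ Z, A ∈ X ∧ w ∉ A) (u : Chains K Z (k + 1)) :
    eraseChains K X w k (inclChains K Z X (k + 1) u) = 0 := by
  refine Chains.ext_faceChain (f := eraseChains K X w k ∘ₗ inclChains K Z X (k + 1))
    (g := 0) (fun A hA hc => ?_) u
  rw [LinearMap.comp_apply, inclChains_faceChain hA hc,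
    eraseChains_faceChain_of_notMem (hZ A hA).1 hc (hZ A hA).2, LinearMap.zero_apply]

theorem inclChains_add_insertChains_eraseChains {w : Fin n} (z : Chains K X (k + 1)) :
    inclChains K (deletion X w) X (k + 1) (inclChains K X (deletion X w) (k + 1) z) +
      insertChains K X w k (eraseChains K X w k z) = z := by
  refine Chains.ext_faceChain (f := inclChains K (deletion X w) X (k + 1) ∘ₗ
    inclChains K X (deletion X w) (k + 1) + insertChains K X w k ∘ₗ eraseChains K X w k)
    (g := LinearMap.id) (fun A hA hc => ?_) z
  rw [LinearMap.add_apply, LinearMap.comp_apply, LinearMap.comp_apply,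
    inclChains_faceChain hA hc, LinearMap.id_apply]
  by_cases hw : w ∈ A
  · rw [faceChain_eq_zero (fun h => h.1.2 hw), map_zero, zero_add,
      eraseChains_faceChain hA hc, map_smul,
      insertChains_faceChain (erase_mem_link hA hw) (by rw [card_erase_of_mem hw, hc]; rfl),
      insert_erase hw, vertexSign_erase_self, smul_smul, vertexSign_mul_self, one_smul]
  · rw [eraseChains_faceChain_of_notMem hA hc hw, map_zero, add_zero,
      inclChains_faceChain (Y := X) (show A ∈ deletion X w from ⟨hA, hw⟩) hc]

theorem boundaryMap_inclChains (hX : IsComplex X) (hY : IsComplex Y) (hXY : ∀ A ∈ X, A ∈ Y)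
    (z : Chains K X (k + 1)) :
    boundaryMap K Y k (inclChains K X Y (k + 1) z) =
      inclChains K X Y k (boundaryMap K X k z) := by
  refine Chains.ext_faceChain (f := boundaryMap K Y k ∘ₗ inclChains K X Y (k + 1))
    (g := inclChains K X Y k ∘ₗ boundaryMap K X k) (fun A hA hc => ?_) z
  rw [LinearMap.comp_apply, LinearMap.comp_apply, inclChains_faceChain hA hc,
    boundaryMap_faceChain hY (hXY A hA) hc, boundaryMap_faceChain hX hA hc, map_sum]
  refine sum_congr rfl fun v hv => ?_
  rw [map_smul, inclChains_faceChain (hX.2 A hA _ (erase_subset v A))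
    (by rw [card_erase_of_mem hv, hc]; rfl)]

theorem boundaryMap_insertChains (hX : IsComplex X) {w : Fin n}
    (hw : ({w} : Finset (Fin n)) ∈ X) (δ : Chains K (link X {w}) (k + 1)) :
    boundaryMap K X (k + 1) (insertChains K X w (k + 1) δ) =
      inclChains K (link X {w}) X (k + 1) δ -
        insertChains K X w k (boundaryMap K (link X {w}) k δ) := by
  have hL : IsComplex (link X {w}) := isComplex_link hX hw
  refine Chains.ext_faceChain (f := boundaryMap K X (k + 1) ∘ₗ insertChains K X w (k + 1))
    (g := inclChains K (link X {w}) X (k + 1) -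
      insertChains K X w k ∘ₗ boundaryMap K (link X {w}) k) (fun G hG hc => ?_) δ
  have hwG : w ∉ G := disjoint_singleton_left.1 hG.1
  rw [LinearMap.comp_apply, LinearMap.sub_apply, LinearMap.comp_apply,
    insertChains_faceChain hG hc, map_smul,
    boundaryMap_faceChain hX (insert_mem_of_mem_link hG) (by rw [card_insert_of_notMem hwG, hc]),
    sum_insert hwG, erase_insert hwG, vertexSign_insert_self, smul_add, smul_smul,
    vertexSign_mul_self, one_smul, inclChains_faceChain hG hc, sub_eq_add_neg,
    boundaryMap_faceChain hL hG hc, map_sum, ← sum_neg_distrib, smul_sum]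
  congr 1
  refine sum_congr rfl fun x hx => ?_
  rw [map_smul, insertChains_faceChain (hL.2 G hG _ (erase_subset x G))
      (by rw [card_erase_of_mem hx, hc]; rfl), smul_smul, smul_smul, ← neg_smul,
    vertexSign_mul_vertexSign_insert hwG hx, erase_insert_of_ne (ne_of_mem_of_not_mem hx hwG).symm]

end VertexSplitting

section ReducedHomology

variable {K} {n : ℕ} {X : Set (Finset (Fin n))}

theorem reducedHomologyZero_of_le {i : ℤ} (h : i ≤ -2) : ReducedHomologyZero K X i := by
  rw [ReducedHomologyZero, if_pos h]
  trivial

theorem reducedHomologyZero_neg_one_iff_surjective :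
    ReducedHomologyZero K X (-1) ↔ Function.Surjective (boundaryMap K X 0) := by
  rw [ReducedHomologyZero, if_neg (by norm_num), if_pos rfl]

theorem reducedHomologyZero_natCast_iff (j : ℕ) :
    ReducedHomologyZero K X j ↔
      LinearMap.ker (boundaryMap K X j) ≤ LinearMap.range (boundaryMap K X (j + 1)) := by
  rw [ReducedHomologyZero, if_neg (by omega), if_neg (by omega), Int.toNat_natCast]

theorem eq_smul_faceChain_empty (h0 : ∅ ∈ X) (γ : Chains K X 0) :
    γ = γ ⟨∅, h0, card_empty⟩ • faceChain K X 0 ∅ := by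
  have hempty : ∀ a : {F : Finset (Fin n) // F ∈ X ∧ F.card = 0},
      a = ⟨∅, h0, card_empty⟩ := fun a => Subtype.ext (card_eq_zero.1 a.2.2)
  ext a
  rw [hempty a, Finsupp.smul_apply, faceChain_of_mem ⟨h0, card_empty⟩, Finsupp.single_eq_same,
    smul_eq_mul, mul_one]

theorem boundaryMap_faceChain_singleton (hX : IsComplex X) {v : Fin n}
    (hv : ({v} : Finset (Fin n)) ∈ X) :
    boundaryMap K X 0 (faceChain K X 1 {v}) = faceChain K X 0 ∅ := by
  rw [boundaryMap_faceChain hX hv (card_singleton v), sum_singleton, erase_singleton,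
    vertexSign_singleton_self, one_smul]

theorem faceChain_ne_zero {k : ℕ} {A : Finset (Fin n)} (h : A ∈ X ∧ A.card = k) :
    faceChain K X k A ≠ 0 := by
  rw [faceChain_of_mem h]
  exact Finsupp.single_ne_zero.2 one_ne_zero

theorem reducedHomologyZero_neg_one_iff (hX : IsComplex X) :
    ReducedHomologyZero K X (-1) ↔ ∃ v : Fin n, {v} ∈ X := by
  rw [reducedHomologyZero_neg_one_iff_surjective]
  constructor
  · intro hsurj
    by_contra! hno
    obtain ⟨x, hx⟩ := hsurj (faceChain K X 0 ∅)
    have hx0 : x = 0 := by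
      ext ⟨A, hA, hc⟩
      obtain ⟨v, rfl⟩ := card_eq_one.1 hc
      exact absurd hA (hno v)
    rw [hx0, map_zero] at hx
    exact faceChain_ne_zero ⟨hX.1, card_empty⟩ hx.symm
  · rintro ⟨v, hv⟩ γ
    refine ⟨γ ⟨∅, hX.1, card_empty⟩ • faceChain K X 1 {v}, ?_⟩
    rw [map_smul, boundaryMap_faceChain_singleton hX hv, ← eq_smul_faceChain_empty hX.1]

end ReducedHomology

section MayerVietoris

variable {K} {n : ℕ} {X : Set (Finset (Fin n))} {w : Fin n}

theorem inclChains_deletion_injective (k : ℕ) :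
    Function.Injective (inclChains K (deletion X w) X k) :=
  Function.LeftInverse.injective inclChains_inclChains_deletion

theorem inclChains_inclChains_of_eraseChains_eq_zero {k : ℕ} {z : Chains K X (k + 1)}
    (h : eraseChains K X w k z = 0) :
    inclChains K (deletion X w) X (k + 1) (inclChains K X (deletion X w) (k + 1) z) = z := by
  simpa only [h, map_zero, add_zero] using inclChains_add_insertChains_eraseChains (w := w) z

theorem boundaryMap_inclChains_deletion (hX : IsComplex X) {k : ℕ}
    (u : Chains K (deletion X w) (k + 1)) :
    boundaryMap K X k (inclChains K (deletion X w) X (k + 1) u) =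
      inclChains K (deletion X w) X k (boundaryMap K (deletion X w) k u) :=
  boundaryMap_inclChains (isComplex_deletion hX w) hX (fun _ hA => hA.1) u

variable (hX : IsComplex X) (hw : ({w} : Finset (Fin n)) ∈ X)
include hX hw

theorem eraseChains_boundaryMap {k : ℕ} (z : Chains K X (k + 2)) :
    eraseChains K X w k (boundaryMap K X (k + 1) z) =
      -boundaryMap K (link X {w}) k (eraseChains K X w (k + 1) z) := by
  conv_lhs => rw [← inclChains_add_insertChains_eraseChains (w := w) z]
  have hdel : ∀ A ∈ deletion X w, A ∈ X ∧ w ∉ A := fun A hA => hA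
  rw [map_add, boundaryMap_inclChains_deletion hX,
    boundaryMap_insertChains hX hw, map_add, map_sub, eraseChains_inclChains_of_notMem hdel,
    eraseChains_inclChains_of_notMem (fun A hA => ⟨hX.mem_of_mem_link hA,
      disjoint_singleton_left.1 hA.1⟩), eraseChains_insertChains, zero_add, zero_sub]

theorem eraseChains_boundaryMap_insertChains {k : ℕ} (δ : Chains K (link X {w}) (k + 1)) :
    eraseChains K X w k (boundaryMap K X (k + 1) (insertChains K X w (k + 1) δ)) =
      -boundaryMap K (link X {w}) k δ := by
  rw [eraseChains_boundaryMap hX hw, eraseChains_insertChains]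

theorem mem_range_boundaryMap_of_deletion {j : ℕ}
    (hdel : LinearMap.ker (boundaryMap K (deletion X w) j) ≤
      LinearMap.range (boundaryMap K (deletion X w) (j + 1)))
    {z : Chains K X (j + 1)} (hz : boundaryMap K X j z = 0) {δ : Chains K (link X {w}) (j + 1)}
    (hδ : boundaryMap K (link X {w}) j δ = eraseChains K X w j z) :
    z ∈ LinearMap.range (boundaryMap K X (j + 1)) := by
  -- correct `z` by a boundary so that it no longer meets the star of `w`
  set z' := z + boundaryMap K X (j + 1) (insertChains K X w (j + 1) δ)
  have hz' : inclChains K (deletion X w) X (j + 1) (inclChains K X (deletion X w) (j + 1) z') =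
      z' := by
    refine inclChains_inclChains_of_eraseChains_eq_zero ?_
    rw [map_add, eraseChains_boundaryMap_insertChains hX hw, hδ, add_neg_cancel]
  have hcycle : boundaryMap K (deletion X w) j (inclChains K X (deletion X w) (j + 1) z') = 0 := by
    refine inclChains_deletion_injective j ?_
    rw [← boundaryMap_inclChains_deletion hX, hz', map_add,
      hz, boundaryMap_boundaryMap hX, add_zero, map_zero]
  obtain ⟨β, hβ⟩ := hdel hcycle
  refine ⟨inclChains K (deletion X w) X (j + 2) β - insertChains K X w (j + 1) δ, ?_⟩
  rw [map_sub, boundaryMap_inclChains_deletion hX, hβ, hz',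
    add_sub_cancel_right]

theorem mem_range_boundaryMap_deletion {j : ℕ}
    (hXj : LinearMap.ker (boundaryMap K X j) ≤ LinearMap.range (boundaryMap K X (j + 1)))
    (hlink : LinearMap.ker (boundaryMap K (link X {w}) j) ≤
      LinearMap.range (boundaryMap K (link X {w}) (j + 1)))
    {u : Chains K (deletion X w) (j + 1)} (hu : boundaryMap K (deletion X w) j u = 0) :
    u ∈ LinearMap.range (boundaryMap K (deletion X w) (j + 1)) := by
  obtain ⟨β, hβ⟩ := hXj (show boundaryMap K X j (inclChains K _ X (j + 1) u) = 0 by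
    rw [boundaryMap_inclChains_deletion hX, hu, map_zero])
  obtain ⟨δ, hδ⟩ := hlink (show boundaryMap K (link X {w}) j (eraseChains K X w (j + 1) β) = 0 by
    rw [← neg_eq_zero, ← eraseChains_boundaryMap hX hw, hβ,
      eraseChains_inclChains_of_notMem (Z := deletion X w) (fun A hA => hA)])
  set β' := β + boundaryMap K X (j + 2) (insertChains K X w (j + 2) δ)
  have hβ' : inclChains K (deletion X w) X (j + 2) (inclChains K X (deletion X w) (j + 2) β') =
      β' := by
    refine inclChains_inclChains_of_eraseChains_eq_zero ?_
    rw [map_add, eraseChains_boundaryMap_insertChains hX hw, hδ, add_neg_cancel]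
  refine ⟨inclChains K X (deletion X w) (j + 2) β', inclChains_deletion_injective (j + 1) ?_⟩
  rw [← boundaryMap_inclChains_deletion hX, hβ', map_add, boundaryMap_boundaryMap hX, add_zero, hβ]

theorem ReducedHomologyZero.of_deletion_of_link {i : ℤ}
    (hdel : ReducedHomologyZero K (deletion X w) i)
    (hlink : ReducedHomologyZero K (link X {w}) (i - 1)) : ReducedHomologyZero K X i := by
  rcases le_or_gt i (-2) with h | h
  · exact reducedHomologyZero_of_le h
  obtain rfl | hi := (show i = -1 ∨ 0 ≤ i by omega)
  · obtain ⟨v, hv⟩ := (reducedHomologyZero_neg_one_iff (isComplex_deletion hX w)).1 hdel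
    exact (reducedHomologyZero_neg_one_iff hX).2 ⟨v, hv.1⟩
  lift i to ℕ using hi
  rw [reducedHomologyZero_natCast_iff] at hdel ⊢
  intro z hz
  rw [LinearMap.mem_ker] at hz
  obtain ⟨δ, hδ⟩ : ∃ δ, boundaryMap K (link X {w}) i δ = eraseChains K X w i z := by
    rcases i with _ | j
    · exact reducedHomologyZero_neg_one_iff_surjective.1 hlink _
    · rw [show ((j + 1 : ℕ) : ℤ) - 1 = j by omega, reducedHomologyZero_natCast_iff] at hlink
      refine hlink (LinearMap.mem_ker.2 ?_)
      rw [← neg_eq_zero, ← eraseChains_boundaryMap hX hw, hz, map_zero]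
  exact mem_range_boundaryMap_of_deletion hX hw hdel hz hδ

theorem ReducedHomologyZero.deletion {i : ℤ} (hXi : ReducedHomologyZero K X i)
    (hlink : ReducedHomologyZero K (link X {w}) i) :
    ReducedHomologyZero K (deletion X w) i := by
  rcases le_or_gt i (-2) with h | h
  · exact reducedHomologyZero_of_le h
  obtain rfl | hi := (show i = -1 ∨ 0 ≤ i by omega)
  · obtain ⟨v, hv⟩ := (reducedHomologyZero_neg_one_iff (isComplex_link hX hw)).1 hlink
    exact (reducedHomologyZero_neg_one_iff (isComplex_deletion hX w)).2
      ⟨v, hX.mem_deletion_of_mem_link hv⟩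
  lift i to ℕ using hi
  rw [reducedHomologyZero_natCast_iff] at hXi hlink ⊢
  exact fun u hu => mem_range_boundaryMap_deletion hX hw hXi hlink (LinearMap.mem_ker.1 hu)

end MayerVietoris

section InducedSubcomplexes

variable {K} {n : ℕ} {Γ : Set (Finset (Fin n))}

theorem reducedHomologyZero_induced_of_erase (hΓ : IsComplex Γ) {T : Finset (Fin n)}
    {w : Fin n} (hw : w ∈ T) {i : ℤ} (hdel : ReducedHomologyZero K (induced Γ (T.erase w)) i)
    (hlink : ({w} : Finset (Fin n)) ∈ Γ →
      ReducedHomologyZero K (induced (link Γ {w}) (T.erase w)) (i - 1)) :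
    ReducedHomologyZero K (induced Γ T) i := by
  by_cases hwΓ : ({w} : Finset (Fin n)) ∈ Γ
  · rw [← deletion_induced] at hdel
    rw [← link_induced hw] at hlink
    exact ReducedHomologyZero.of_deletion_of_link (isComplex_induced hΓ T)
      ⟨hwΓ, singleton_subset_iff.2 hw⟩ hdel (hlink hwΓ)
  · rwa [← induced_erase_of_singleton_notMem hΓ hwΓ]

theorem reducedHomologyZero_induced_erase (hΓ : IsComplex Γ) {T : Finset (Fin n)}
    {w : Fin n} (hw : w ∈ T) {i : ℤ} (hT : ReducedHomologyZero K (induced Γ T) i)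
    (hlink : ({w} : Finset (Fin n)) ∈ Γ →
      ReducedHomologyZero K (induced (link Γ {w}) (T.erase w)) i) :
    ReducedHomologyZero K (induced Γ (T.erase w)) i := by
  by_cases hwΓ : ({w} : Finset (Fin n)) ∈ Γ
  · rw [← link_induced hw] at hlink
    rw [← deletion_induced]
    exact hT.deletion (isComplex_induced hΓ T) ⟨hwΓ, singleton_subset_iff.2 hw⟩ (hlink hwΓ)
  · rwa [induced_erase_of_singleton_notMem hΓ hwΓ]

theorem reducedHomologyZero_of_subset_singleton {X : Set (Finset (Fin n))} (hX : IsComplex X)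
    {v : Fin n} (hv : ({v} : Finset (Fin n)) ∈ X) (hsub : ∀ F ∈ X, F ⊆ {v}) (i : ℤ) :
    ReducedHomologyZero K X i := by
  rcases le_or_gt i (-2) with h | h
  · exact reducedHomologyZero_of_le h
  obtain rfl | hi := (show i = -1 ∨ 0 ≤ i by omega)
  · exact (reducedHomologyZero_neg_one_iff hX).2 ⟨v, hv⟩
  lift i to ℕ using hi
  rw [reducedHomologyZero_natCast_iff]
  intro z hz
  suffices z = 0 by rw [this]; exact zero_mem _
  have hcard : ∀ A ∈ X, A.card ≤ 1 := fun A hA => card_singleton v ▸ card_le_card (hsub A hA)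
  rcases i with _ | j
  · have hvertex : ∀ a : {F : Finset (Fin n) // F ∈ X ∧ F.card = 0 + 1},
        a = ⟨{v}, hv, card_singleton v⟩ := fun a => Subtype.ext <|
      (subset_singleton_iff.1 (hsub _ a.2.1)).resolve_left (fun h => by simpa [h] using a.2.2)
    have hz' : z = z ⟨{v}, hv, card_singleton v⟩ • faceChain K X 1 {v} := by
      ext a
      rw [hvertex a, Finsupp.smul_apply, faceChain_of_mem ⟨hv, card_singleton v⟩,
        Finsupp.single_eq_same, smul_eq_mul, mul_one]
    rw [LinearMap.mem_ker, hz', map_smul, boundaryMap_faceChain_singleton hX hv,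
      smul_eq_zero] at hz
    rw [hz', hz.resolve_right (faceChain_ne_zero ⟨hX.1, card_empty⟩), zero_smul]
  · ext ⟨A, hA, hc⟩
    have := hcard A hA
    omega

theorem reducedHomologyZero_induced_of_mem (hΓ : IsComplex Γ) {M : Finset (Fin n)}
    (hM : M ∈ Γ) (hne : M.Nonempty) (i : ℤ) : ReducedHomologyZero K (induced Γ M) i := by
  induction M using Finset.strongInduction generalizing Γ i with
  | H M ih =>
  obtain ⟨v, hv⟩ := hne
  have hvΓ : ({v} : Finset (Fin n)) ∈ Γ := hΓ.2 M hM {v} (singleton_subset_iff.2 hv)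
  rcases (M.erase v).eq_empty_or_nonempty with hMv | hMv
  · have hMeq : M = {v} := by rw [← insert_erase hv, hMv]; rfl
    exact reducedHomologyZero_of_subset_singleton (isComplex_induced hΓ M)
      ⟨hvΓ, hMeq.ge⟩ (fun F hF => hMeq ▸ hF.2) i
  · exact reducedHomologyZero_induced_of_erase hΓ hv
      (ih _ (erase_ssubset hv) hΓ (hΓ.2 M hM _ (erase_subset v M)) hMv i)
      (fun _ => ih _ (erase_ssubset hv) (isComplex_link hΓ hvΓ) (erase_mem_link hM hv) hMv _)

theorem reducedHomologyZero_induced_of_face_subset (hΓ : IsComplex Γ) {M S : Finset (Fin n)}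
    (hM : M ∈ Γ) (hne : M.Nonempty) (hMS : M ⊆ S) {i : ℤ}
    (hlink : ∀ T, M ⊆ T → T ⊆ S → ∀ w ∈ T, w ∉ M → ({w} : Finset (Fin n)) ∈ Γ →
      ReducedHomologyZero K (induced (link Γ {w}) (T.erase w)) (i - 1)) :
    ReducedHomologyZero K (induced Γ S) i := by
  induction S using Finset.strongInduction with
  | H S ih =>
  by_cases hSM : S = M
  · exact hSM ▸ reducedHomologyZero_induced_of_mem hΓ hM hne i
  obtain ⟨w, hwS, hwM⟩ := exists_of_ssubset (ssubset_of_subset_of_ne hMS (Ne.symm hSM))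
  exact reducedHomologyZero_induced_of_erase hΓ hwS
    (ih _ (erase_ssubset hwS) (subset_erase.2 ⟨hMS, hwM⟩)
      fun T hMT hTS => hlink T hMT (hTS.trans (erase_subset w S)))
    (hlink S hMS subset_rfl w hwS hwM)

end InducedSubcomplexes

section Connectivity

variable {K} {n : ℕ} {Γ : Set (Finset (Fin n))}

theorem faceChain_sub_faceChain_mem_range (hΓ : IsComplex Γ) {v x : Fin n}
    (hvx : ({v, x} : Finset (Fin n)) ∈ Γ) :
    faceChain K Γ 1 {v} - faceChain K Γ 1 {x} ∈ LinearMap.range (boundaryMap K Γ 1) := by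
  wlog h : v < x generalizing v x
  · rcases eq_or_lt_of_le (not_lt.1 h) with rfl | h
    · rw [sub_self]; exact zero_mem _
    · simpa using neg_mem (this (pair_comm v x ▸ hvx) h)
  refine ⟨-faceChain K Γ 2 {v, x}, ?_⟩
  rw [map_neg, boundaryMap_faceChain hΓ hvx (card_pair h.ne), sum_pair h.ne]
  simp [vertexSign, filter_insert, filter_singleton, h, not_lt_of_gt h, h.ne,
    erase_insert_of_ne, sub_eq_add_neg]

theorem boundaryMap_faceChain_of_card_eq_one (hΓ : IsComplex Γ) {A : Finset (Fin n)}
    (hA : A ∈ Γ) (hc : A.card = 1) :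
    boundaryMap K Γ 0 (faceChain K Γ 1 A) = faceChain K Γ 0 ∅ := by
  obtain ⟨v, rfl⟩ := card_eq_one.1 hc
  exact boundaryMap_faceChain_singleton hΓ hA

/-- Any two facets meet, so any two vertices are joined by a path of two edges. -/
theorem faceChain_sub_faceChain_mem_range_of_card_lt (hΓ : IsComplex Γ) {e : ℕ}
    (hP : IsPure Γ e) {U : Finset (Fin n)} (hU : ∀ F ∈ Γ, F ⊆ U) (hcard : U.card < 2 * e)
    {v x : Fin n} (hv : ({v} : Finset (Fin n)) ∈ Γ) (hx : ({x} : Finset (Fin n)) ∈ Γ) :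
    faceChain K Γ 1 {v} - faceChain K Γ 1 {x} ∈ LinearMap.range (boundaryMap K Γ 1) := by
  obtain ⟨Gv, hGv, hvGv, hGvc⟩ := hP.2 {v} hv
  obtain ⟨Gx, hGx, hxGx, hGxc⟩ := hP.2 {x} hx
  obtain ⟨y, hy⟩ : (Gv ∩ Gx).Nonempty := by
    rw [← card_pos]
    have := card_union_add_card_inter Gv Gx
    have := card_le_card (union_subset (hU Gv hGv) (hU Gx hGx))
    omega
  have hvy := hΓ.2 Gv hGv {v, y} (insert_subset (singleton_subset_iff.1 hvGv)
    (singleton_subset_iff.2 (mem_inter.1 hy).1))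
  have hyx := hΓ.2 Gx hGx {y, x} (insert_subset (mem_inter.1 hy).2 hxGx)
  simpa using add_mem (faceChain_sub_faceChain_mem_range (K := K) hΓ hvy)
    (faceChain_sub_faceChain_mem_range hΓ hyx)

theorem reducedHomologyZero_zero_of_card_lt (hΓ : IsComplex Γ) {e : ℕ} (hP : IsPure Γ e)
    {U : Finset (Fin n)} (hU : ∀ F ∈ Γ, F ⊆ U) (hcard : U.card < 2 * e) :
    ReducedHomologyZero K Γ 0 := by
  obtain ⟨M, hM, hMc⟩ := hP.1
  obtain ⟨v₀, hv₀⟩ : M.Nonempty := card_pos.1 (by omega)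
  have hv₀Γ := hΓ.2 M hM {v₀} (singleton_subset_iff.2 hv₀)
  rw [show (0 : ℤ) = ((0 : ℕ) : ℤ) from rfl, reducedHomologyZero_natCast_iff]
  intro z hz
  have hz_sum : z = ∑ a ∈ z.support, z a • faceChain K Γ 1 a.1 := by
    conv_lhs => rw [← Finsupp.sum_single z]
    exact sum_congr rfl fun a _ => single_eq_smul_faceChain a (z a)
  have htotal : ∑ a ∈ z.support, z a = 0 := by
    rw [LinearMap.mem_ker, hz_sum, map_sum, sum_congr rfl fun a _ => by
      rw [map_smul, boundaryMap_faceChain_of_card_eq_one hΓ a.2.1 a.2.2], ← sum_smul,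
      smul_eq_zero] at hz
    exact hz.resolve_right (faceChain_ne_zero ⟨hΓ.1, card_empty⟩)
  have hz_diff : z = ∑ a ∈ z.support, z a • (faceChain K Γ 1 a.1 - faceChain K Γ 1 {v₀}) := by
    simp only [smul_sub, sum_sub_distrib, ← sum_smul, htotal, zero_smul, sub_zero]
    exact hz_sum
  rw [hz_diff]
  refine sum_mem fun a _ => Submodule.smul_mem _ _ ?_
  obtain ⟨v, hv⟩ := card_eq_one.1 a.2.2
  rw [hv]
  exact faceChain_sub_faceChain_mem_range_of_card_lt hΓ hP hU hcard (hv ▸ a.2.1) hv₀Γ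

end Connectivity

section Induction

variable {K} {n : ℕ}

theorem subset_erase_of_mem_link {Γ : Set (Finset (Fin n))} {U G : Finset (Fin n)} {w : Fin n}
    (hU : ∀ F ∈ Γ, F ⊆ U) (hG : G ∈ link Γ {w}) : G ⊆ U.erase w := by
  simpa only [sdiff_singleton_eq_erase] using subset_sdiff_of_mem_link hU hG

theorem reducedHomologyZero_of_link {e : ℕ} {Γ : Set (Finset (Fin n))} {U : Finset (Fin n)}
    (hΓ : IsComplex Γ) (hP : IsPure Γ e) (hU : ∀ F ∈ Γ, F ⊆ U) {i : ℤ} (hi : i < e - 1)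
    (hi' : i < 2 * e - U.card)
    (hlink : ∀ w, ({w} : Finset (Fin n)) ∈ Γ → ∀ T ⊆ U.erase w, e ≤ T.card →
      ReducedHomologyZero K (induced (link Γ {w}) T) (i - 1)) :
    ReducedHomologyZero K Γ i := by
  rcases le_or_gt i (-2) with h | h
  · exact reducedHomologyZero_of_le h
  obtain rfl | hi0 := eq_or_ne i 0
  · exact reducedHomologyZero_zero_of_card_lt hΓ hP hU (by omega)
  obtain ⟨M, hM, hMc⟩ := hP.1
  rw [← induced_eq_self hU]
  refine reducedHomologyZero_induced_of_face_subset hΓ hM (card_pos.1 (by omega)) (hU M hM)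
    fun T hMT hTU w hwT hwM hwΓ => hlink w hwΓ _ (erase_subset_erase w hTU) ?_
  have := card_lt_card (ssubset_of_subset_of_ne hMT (by grind))
  rw [card_erase_of_mem hwT]
  omega

theorem reducedHomologyZero_induced_of_linksCMFrom (s : ℕ) {e : ℕ}
    {Γ : Set (Finset (Fin n))} {U S : Finset (Fin n)} (hΓ : IsComplex Γ) (hP : IsPure Γ e)
    (hU : ∀ F ∈ Γ, F ⊆ U) (hCM : LinksCMFrom K Γ s) {i : ℤ}
    (hi : i < e - (U \ S).card - 1) (hi' : s ≠ 0 → i < 2 * e - U.card - s + 1) :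
    ReducedHomologyZero K (induced Γ S) i := by
  have hlink {w : Fin n} (hwΓ : ({w} : Finset (Fin n)) ∈ Γ) :
      IsComplex (link Γ {w}) ∧ IsPure (link Γ {w}) (e - 1) ∧
        (∀ F ∈ link Γ {w}, F ⊆ U.erase w) ∧ LinksCMFrom K (link Γ {w}) (s - 1) ∧ 1 ≤ e := by
    simpa using ⟨isComplex_link hΓ hwΓ, isPure_link hP hwΓ,
      fun F hF => subset_erase_of_mem_link hU hF, linksCMFrom_link hCM {w}, hP.card_le hwΓ⟩
  rcases (U \ S).eq_empty_or_nonempty with hUS | ⟨w, hw⟩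
  · rw [hUS, card_empty] at hi
    rw [induced_eq_self fun F hF => (hU F hF).trans (sdiff_eq_empty_iff_subset.1 hUS)]
    by_cases hs : s = 0
    · have hCMΓ := hCM ∅ hΓ.1 (by omega)
      rw [link_empty] at hCMΓ
      exact hCMΓ.reducedHomologyZero (by rw [hP.dimC_eq]; omega)
    refine reducedHomologyZero_of_link hΓ hP hU (by omega) (by have := hi' hs; omega)
      fun w hwΓ T hTU hT => ?_
    obtain ⟨hΓw, hPw, hUw, hCMw, he⟩ := hlink hwΓ
    have hUT := card_sdiff_of_subset hTU
    have hU1 := card_erase_of_mem (hU _ hwΓ (mem_singleton_self w))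
    have := hi' hs
    exact reducedHomologyZero_induced_of_linksCMFrom (s - 1) hΓw hPw hUw hCMw (by omega)
      fun _ => by omega
  · obtain ⟨hwU, hwS⟩ := mem_sdiff.1 hw
    have hm : (U \ insert w S).card = (U \ S).card - 1 := by
      rw [sdiff_insert, card_erase_of_mem hw]
    have := card_pos.2 ⟨w, hw⟩
    rw [← erase_insert hwS]
    refine reducedHomologyZero_induced_erase hΓ (mem_insert_self w S)
      (reducedHomologyZero_induced_of_linksCMFrom s hΓ hP hU hCM (by omega) hi') fun hwΓ => ?_
    obtain ⟨hΓw, hPw, hUw, hCMw, he⟩ := hlink hwΓ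
    have hm' : ((U.erase w) \ S).card = (U \ S).card - 1 := by
      rw [erase_sdiff_comm, card_erase_of_mem hw]
    have hU1 := card_erase_of_mem hwU
    have := card_pos.2 ⟨w, hwU⟩
    rw [erase_insert hwS]
    exact reducedHomologyZero_induced_of_linksCMFrom (s - 1) hΓw hPw hUw hCMw
      (by rw [hm']; omega) fun hs => by have := hi' (by omega); omega
termination_by (s, (U \ S).card)
decreasing_by
  all_goals rw [Prod.lex_def]; omega

end Induction

theorem CMt_implies_Serre_general (K : Type) [Field K] {n d t : ℕ}
    (Δ : Set (Finset (Fin n)))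
    (hCM : IsCMt K Δ d t) :
    SerreS K Δ (2 * (d : ℤ) - n - t + 2) := by
  obtain ⟨hΔ, hP, hCMt⟩ := hCM
  intro F hF i hi
  have hPF := isPure_link hP hF
  rw [lt_min_iff, hPF.dimC_eq] at hi
  have hlinkU : ∀ G ∈ link Δ F, G ⊆ univ \ F :=
    fun G hG => subset_sdiff_of_mem_link (fun _ _ => subset_univ _) hG
  have hcard : (univ \ F).card = n - F.card := by
    rw [card_sdiff_of_subset (subset_univ F), card_univ, Fintype.card_fin]
  have hFd := hP.card_le hF
  have hFn : F.card ≤ n := by simpa using card_le_univ F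
  rw [← induced_eq_self hlinkU]
  refine reducedHomologyZero_induced_of_linksCMFrom (t - F.card) (isComplex_link hΔ hF) hPF
    hlinkU (linksCMFrom_link hCMt F) (by rw [sdiff_self, bot_eq_empty, card_empty]; omega) fun hs => ?_
  rw [hcard]
  omega

/-- If `Δ` is a `(d-1)`-dimensional `CM_t` simplicial complex on `n` vertices, then `Δ`
satisfies Serre's condition `S_{2d-n-t+2}`. -/
theorem CMt_implies_Serre (K : Type) [Field K] {n d t : ℕ}
    (Δ : Set (Finset (Fin n))) (hvert : ∀ v : Fin n, ({v} : Finset (Fin n)) ∈ Δ)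
    (hCM : IsCMt K Δ d t) :
    SerreS K Δ (2 * (d : ℤ) - n - t + 2) :=
  CMt_implies_Serre_general K Δ hCM
end

section
/- Let Γ be the simplicial complex on vertex set {v_1,...,v_r} (r ≥ 4) whose facets are the sets V \ {v_i, v_j} where {v_i, v_j} ranges over pairs of non-consecutive vertices modulo r. Then the f-vector of Γ satisfies f_{-1} = 1, f_i = binomial(r, i+1) for 0 ≤ i ≤ r-4, and f_{r-3} = r(r-3)/2. -/
open Finset

/-! ## Simplicial (reduced, augmented) chain complex and reduced homology -/

variable (K : Type) [Field K]

/-! Three distinct vertices of a cycle of length at least `4` are never pairwise consecutive, so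
every set missing at least three vertices misses a non-consecutive pair and is a face. A face of
size `r - 2` is the complement of a non-consecutive pair, that is, of an edge of the complement of
the cycle graph; that graph is `(r - 3)`-regular, hence has `r (r - 3) / 2` edges. -/

lemma faceCount_zero_eq_one {n : ℕ} {Δ : Set (Finset (Fin n))} (h : ∅ ∈ Δ) :
    faceCount Δ 0 = 1 := by
  have : {F | F ∈ Δ ∧ F.card = 0} = {∅} := by
    ext F
    simp only [Set.mem_ofPred_eq, card_eq_zero, Set.mem_singleton_iff, and_iff_right_iff_imp]
    rintro rfl
    exact h
  rw [faceCount, this, Set.ncard_singleton]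

lemma faceCount_eq_choose {n k : ℕ} {Δ : Set (Finset (Fin n))}
    (h : ∀ F : Finset (Fin n), F.card = k → F ∈ Δ) : faceCount Δ k = n.choose k := by
  have : {F | F ∈ Δ ∧ F.card = k} = ↑(powersetCard k (univ : Finset (Fin n))) := by
    ext F
    simp only [Set.mem_ofPred_eq, mem_coe, mem_powersetCard, subset_univ, true_and,
      and_iff_right_iff_imp]
    exact h F
  rw [faceCount, this, Set.ncard_coe_finset, card_powersetCard, card_univ, Fintype.card_fin]

def coEdgeComplex {n : ℕ} (H : SimpleGraph (Fin n)) : Set (Finset (Fin n)) :=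
  {F | ∃ i j, H.Adj i j ∧ F ⊆ ({i, j} : Finset (Fin n))ᶜ}

lemma mem_coEdgeComplex_of_card_add_three_le {n : ℕ} {H : SimpleGraph (Fin n)}
    (hH : Hᶜ.CliqueFree 3) {F : Finset (Fin n)} (hF : F.card + 3 ≤ n) :
    F ∈ coEdgeComplex H := by
  obtain ⟨t, htF, ht⟩ : ∃ t ⊆ Fᶜ, t.card = 3 :=
    exists_subset_card_eq (by rw [card_compl, Fintype.card_fin]; omega)
  have hnot : ¬ Hᶜ.IsClique (t : Set (Fin n)) := fun hc => hH t ⟨hc, ht⟩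
  obtain ⟨i, hi, j, hj, hij, hadj⟩ : ∃ i ∈ t, ∃ j ∈ t, i ≠ j ∧ ¬ Hᶜ.Adj i j := by
    simpa [SimpleGraph.IsClique, Set.Pairwise] using hnot
  refine ⟨i, j, by simpa [hij] using hadj, ?_⟩
  rw [subset_compl_comm]
  intro x hx
  rcases mem_insert.mp hx with rfl | hx
  · exact htF hi
  · rw [mem_singleton.mp hx]; exact htF hj

lemma faceCount_coEdgeComplex_sub_two {n : ℕ} (H : SimpleGraph (Fin n)) :
    faceCount (coEdgeComplex H) (n - 2) = H.edgeSet.ncard := by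
  have hinj : Set.InjOn (fun e : Sym2 (Fin n) => e.toFinsetᶜ) H.edgeSet := fun e _ e' _ h =>
    Sym2.ext fun a => by rw [← Sym2.mem_toFinset, compl_injective h, Sym2.mem_toFinset]
  have hfaces : {F | F ∈ coEdgeComplex H ∧ F.card = n - 2} =
      (fun e : Sym2 (Fin n) => e.toFinsetᶜ) '' H.edgeSet := by
    ext F
    constructor
    · rintro ⟨⟨i, j, hij, hF⟩, hcard⟩
      have hpair : (({i, j} : Finset (Fin n))ᶜ).card = n - 2 := by
        rw [card_compl, Fintype.card_fin, card_pair hij.ne]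
      exact ⟨s(i, j), hij, by
        change s(i, j).toFinsetᶜ = F
        rw [Sym2.toFinset_mk_eq]; exact (eq_of_subset_of_card_le hF (by omega)).symm⟩
    · rintro ⟨e, he, rfl⟩
      induction e using Sym2.ind with
      | _ i j =>
        change s(i, j).toFinsetᶜ ∈ _
        rw [Sym2.toFinset_mk_eq]
        exact ⟨⟨i, j, he, subset_rfl⟩, by rw [card_compl, Fintype.card_fin, card_pair he.ne]⟩
  rw [faceCount, hfaces, hinj.ncard_image]

lemma cycleGraph_eq_simpleGraph_cycleGraph (r : ℕ) :
    cycleGraph r = SimpleGraph.cycleGraph r := by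
  match r with
  | 0 | 1 => exact Subsingleton.elim _ _
  | m + 2 =>
    ext a b
    have hsucc : ∀ x y : Fin (m + 2), (x.val + 1) % (m + 2) = y.val ↔ y = x + 1 := by
      simp [Fin.ext_iff, Fin.val_add, eq_comm]
    simp only [cycleGraph, SimpleGraph.cycleGraph_adj, sub_eq_iff_eq_add', hsucc]
    exact ⟨fun h => h.2.symm, fun h => ⟨by rintro rfl; simp at h, h.symm⟩⟩

lemma simpleGraph_cycleGraph_cliqueFree_three {r : ℕ} (hr : 4 ≤ r) :
    (SimpleGraph.cycleGraph r).CliqueFree 3 := by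
  obtain ⟨m, rfl⟩ : ∃ m, r = m + 4 := ⟨r - 4, by omega⟩
  intro s hs
  obtain ⟨a, b, c, hab, hac, hbc, -⟩ := SimpleGraph.is3Clique_iff.mp hs
  rw [SimpleGraph.cycleGraph_adj] at hab hac hbc
  -- a triangle would force `±1 ± 1 = ±1` in `Fin (m + 4)`
  have h1 : (1 : Fin (m + 4)) ≠ 0 := by simp
  have h2 : (2 : Fin (m + 4)) ≠ 0 := by simp [Fin.ext_iff, Nat.mod_eq_of_lt]
  have h3 : (3 : Fin (m + 4)) ≠ 0 := by simp [Fin.ext_iff, Nat.mod_eq_of_lt]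
  grind

lemma two_mul_card_edgeFinset_compl_cycleGraph {r : ℕ} (hr : 3 ≤ r) :
    2 * #(SimpleGraph.cycleGraph r)ᶜ.edgeFinset = r * (r - 3) := by
  obtain ⟨m, rfl⟩ : ∃ m, r = m + 3 := ⟨r - 3, by omega⟩
  rw [← SimpleGraph.sum_degrees_eq_twice_card_edges]
  simp [SimpleGraph.degree_compl, SimpleGraph.cycleGraph_degree_three_le]

lemma gammaC_eq_coEdgeComplex (r : ℕ) :
    GammaC r = coEdgeComplex (SimpleGraph.cycleGraph r)ᶜ := by
  ext F
  simp [GammaC, coEdgeComplex, cycleGraph_eq_simpleGraph_cycleGraph, and_assoc]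

/-- The `f`-vector of the complex generated by the complements of the non-consecutive
vertex pairs of an `r`-cycle (`r ≥ 4`): `f_{-1} = 1`, `f_i = C(r, i+1)` for
`0 ≤ i ≤ r-4` (i.e. all subsets of cardinality `≤ r-3` are faces), and
`f_{r-3} = r(r-3)/2`. -/
theorem cycle_link_complex_f_vector (r : ℕ) (hr : 4 ≤ r) :
    faceCount (GammaC r) 0 = 1 ∧
    (∀ k : ℕ, 1 ≤ k → k ≤ r - 3 → faceCount (GammaC r) k = r.choose k) ∧
    faceCount (GammaC r) (r - 2) = r * (r - 3) / 2 := by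
  rw [gammaC_eq_coEdgeComplex]
  have hfull : ∀ F : Finset (Fin r), F.card ≤ r - 3 →
      F ∈ coEdgeComplex (SimpleGraph.cycleGraph r)ᶜ := fun F hF =>
    mem_coEdgeComplex_of_card_add_three_le
      (by simpa using simpleGraph_cycleGraph_cliqueFree_three hr) (by omega)
  refine ⟨faceCount_zero_eq_one (hfull ∅ (by simp)),
    fun k _ hk => faceCount_eq_choose fun F hF => hfull F (hF ▸ hk), ?_⟩
  rw [faceCount_coEdgeComplex_sub_two, ← SimpleGraph.coe_edgeFinset, Set.ncard_coe_finset,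
    ← two_mul_card_edgeFinset_compl_cycleGraph (by omega : 3 ≤ r), Nat.mul_div_cancel_left _ two_pos]
end
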